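/- Let 𝒢 be a simple graph on a finite vertex set 𝒱 in which every vertex has degree at most d, fix o ∈ 𝒱, r ∈ ℕ, t > 0, and v : 𝒱 → ℝ. Let B_r be the set of vertices at graph distance at most r from o, and let 𝒢^{(r)} be the graph obtained from 𝒢 by deleting every edge with one endpoint in B_r and the other endpoint outside B_r. Set H = −t·A + diag(v) and H^{(r)} = −t·A^{(r)} + diag(v), where A and A^{(r)} are the adjacency matrices of 𝒢 and 𝒢^{(r)}. Then for z = E + iη with η > 0 and μ = log(1 + η/(4td)): | ((H − z·Id)^{−1})_{oo} − ((H^{(r)} − z·Id)^{−1})_{oo} | ≤ (4td/η²)·exp(−2μr). -/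

import Mathlib

open Matrix
open scoped Classical Real

noncomputable section

/-- The ball of radius `r` around the vertex `o` in the graph `G`: all vertices
reachable from `o` by a walk of length at most `r`. -/
def graphBall {V : Type*} (G : SimpleGraph V) (o : V) (r : ℕ) : Set V :=
  {v | ∃ p : G.Walk o v, p.length ≤ r}

/-!
Combes–Thomas estimate. Let `φ = μ · dist(o, ·)`, which changes by at most `μ` along edges.
Conjugating `H` by the diagonal weight `e^φ` perturbs it by a matrix with entries at most
`t (e^μ - 1)` on edges and zero elsewhere, hence (Schur test) of `ℓ²` norm at most
`t d (e^μ - 1) = η / 4`. Since `Im ⟪x, (H - z) x⟫ = -η ‖x‖²`, the weighted resolvents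
`e^{±φ} (H - z)⁻¹ e^{∓φ}` therefore have norm at most `(3η/4)⁻¹`, and likewise for `H^{(r)}`.
Now `H^{(r)} - H` lives on the edges leaving `B_r`, where `φ x + φ y ≥ μ (2r + 1)`, so after
weighting by `e^{-φ}` on both sides its norm is at most `t d e^{-μ(2r+1)}`. With
`R = (H - z)⁻¹` and `R' = (H^{(r)} - z)⁻¹`, the resolvent identity `R - R' = R (H^{(r)} - H) R'`,
with the weights inserted, gives `|R_oo - R'_oo| ≤ (4 / 3η)² t d e^{-μ(2r+1)}`.
-/

open scoped Matrix.Norms.L2Operator ComplexInnerProductSpace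

theorem Real.abs_exp_sub_one_le_exp_abs_sub_one (a : ℝ) : |Real.exp a - 1| ≤ Real.exp |a| - 1 := by
  rcases le_total 0 a with ha | ha
  · rw [abs_of_nonneg ha, abs_of_nonneg (by linarith [Real.add_one_le_exp a])]
  · have h₁ : Real.exp a ≤ 1 := Real.exp_le_one_iff.mpr ha
    have h₂ : 1 ≤ Real.exp (-a) := Real.one_le_exp_iff.mpr (by linarith)
    -- `1 - e^a = e^a (e^{-a} - 1) ≤ e^{-a} - 1`
    have h₃ : Real.exp a * Real.exp (-a) = 1 := by
      rw [← Real.exp_add, add_neg_cancel, Real.exp_zero]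
    rw [abs_of_nonpos ha, abs_of_nonpos (by linarith)]
    nlinarith

theorem LinearMap.IsSymmetric.mul_norm_le_norm_sub_smul {E : Type*} [NormedAddCommGroup E]
    [InnerProductSpace ℂ E] {T : E →ₗ[ℂ] E} (hT : T.IsSymmetric) (z : ℂ) (x : E) :
    |z.im| * ‖x‖ ≤ ‖T x - z • x‖ := by
  have him : (⟪x, T x - z • x⟫).im = -(z.im * ‖x‖ ^ 2) := by
    have hTx : (⟪x, T x⟫).im = 0 := hT.im_inner_self_apply x
    have hx_re : (⟪x, x⟫).re = ‖x‖ ^ 2 := inner_self_eq_norm_sq (𝕜 := ℂ) x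
    have hx_im : (⟪x, x⟫).im = 0 := inner_self_im (𝕜 := ℂ) x
    rw [inner_sub_right, inner_smul_right, Complex.sub_im, Complex.mul_im, hTx, hx_re, hx_im]
    ring
  have hsq : |z.im| * ‖x‖ ^ 2 ≤ ‖x‖ * ‖T x - z • x‖ :=
    calc |z.im| * ‖x‖ ^ 2 = |(⟪x, T x - z • x⟫).im| := by rw [him, abs_neg, abs_mul, abs_sq]
      _ ≤ ‖⟪x, T x - z • x⟫‖ := Complex.abs_im_le_norm _
      _ ≤ ‖x‖ * ‖T x - z • x‖ := norm_inner_le_norm _ _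
  rcases (norm_nonneg x).eq_or_lt with hx | hx
  · rw [← hx, mul_zero]
    exact norm_nonneg _
  · nlinarith

namespace Matrix

variable {n : Type*} [Fintype n] [DecidableEq n]

section RCLike

variable {𝕜 : Type*} [RCLike 𝕜]

theorem norm_apply_le_l2_opNorm (A : Matrix n n 𝕜) (i j : n) : ‖A i j‖ ≤ ‖A‖ :=
  calc ‖A i j‖ = ‖toEuclideanCLM (𝕜 := 𝕜) A (EuclideanSpace.single j 1) i‖ := by
        simp [mulVec_single]
    _ ≤ ‖toEuclideanCLM (𝕜 := 𝕜) A (EuclideanSpace.single j 1)‖ := PiLp.norm_apply_le _ _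
    _ ≤ ‖A‖ * ‖EuclideanSpace.single j (1 : 𝕜)‖ := ContinuousLinearMap.le_opNorm _ _
    _ = ‖A‖ := by simp

theorem l2_opNorm_le_of_sum_norm_le (A : Matrix n n 𝕜) {a : ℝ} (ha : 0 ≤ a)
    (hrow : ∀ i, ∑ j, ‖A i j‖ ≤ a) (hcol : ∀ j, ∑ i, ‖A i j‖ ≤ a) : ‖A‖ ≤ a := by
  refine ContinuousLinearMap.opNorm_le_bound _ ha fun x => ?_
  have hrow_sq : ∀ i, ‖(A *ᵥ x.ofLp) i‖ ^ 2 ≤ a * ∑ j, ‖A i j‖ * ‖x j‖ ^ 2 := fun i =>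
    calc ‖(A *ᵥ x.ofLp) i‖ ^ 2 ≤ (∑ j, ‖A i j‖ * ‖x j‖) ^ 2 := by
          gcongr
          exact (norm_sum_le _ _).trans_eq (by simp [norm_mul])
      _ ≤ (∑ j, ‖A i j‖) * ∑ j, ‖A i j‖ * ‖x j‖ ^ 2 :=
          Finset.sum_sq_le_sum_mul_sum_of_sq_le_mul _ (fun _ _ => norm_nonneg _)
            (fun _ _ => by positivity) fun _ _ => le_of_eq (by ring)
      _ ≤ a * ∑ j, ‖A i j‖ * ‖x j‖ ^ 2 := by gcongr; exact hrow i
  refine le_of_sq_le_sq ?_ (by positivity)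
  calc ‖toEuclideanCLM (𝕜 := 𝕜) A x‖ ^ 2 = ∑ i, ‖(A *ᵥ x.ofLp) i‖ ^ 2 := by
        rw [EuclideanSpace.norm_sq_eq]; rfl
    _ ≤ ∑ i, a * ∑ j, ‖A i j‖ * ‖x j‖ ^ 2 := Finset.sum_le_sum fun i _ => hrow_sq i
    _ = a * ∑ j, (∑ i, ‖A i j‖) * ‖x j‖ ^ 2 := by
        simp only [← Finset.mul_sum, Finset.sum_mul]
        rw [Finset.sum_comm]
    _ ≤ a * ∑ j, a * ‖x j‖ ^ 2 := by gcongr with j; exact hcol j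
    _ = (a * ‖x‖) ^ 2 := by rw [← Finset.mul_sum, ← EuclideanSpace.norm_sq_eq]; ring

theorem isUnit_of_mul_norm_le_norm_toEuclideanCLM (M : Matrix n n 𝕜) {c : ℝ} (hc : 0 < c)
    (h : ∀ x, c * ‖x‖ ≤ ‖toEuclideanCLM (𝕜 := 𝕜) M x‖) : IsUnit M := by
  refine mulVec_injective_iff_isUnit.mp fun x y hxy => ?_
  have hzero := h (WithLp.toLp 2 (x - y))
  rw [toEuclideanCLM_toLp, mulVec_sub, hxy, sub_self, WithLp.toLp_zero, norm_zero] at hzero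
  have : ‖WithLp.toLp 2 (x - y)‖ = 0 :=
    le_antisymm (nonpos_of_mul_nonpos_right hzero hc) (norm_nonneg _)
  simpa [sub_eq_zero] using this

theorem l2_opNorm_inv_le_of_mul_norm_le_norm_toEuclideanCLM (M : Matrix n n 𝕜) {c : ℝ}
    (hc : 0 < c) (h : ∀ x, c * ‖x‖ ≤ ‖toEuclideanCLM (𝕜 := 𝕜) M x‖) : ‖M⁻¹‖ ≤ c⁻¹ := by
  have hM : M * M⁻¹ = 1 := mul_nonsing_inv M
    ((isUnit_iff_isUnit_det M).mp (isUnit_of_mul_norm_le_norm_toEuclideanCLM M hc h))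
  rw [← l2_opNorm_toEuclideanCLM]
  refine ContinuousLinearMap.opNorm_le_bound _ (inv_nonneg.mpr hc.le) fun x => ?_
  have := h (toEuclideanCLM (𝕜 := 𝕜) M⁻¹ x)
  rw [← mul_apply_eq_comp, ← map_mul, hM, map_one, one_apply_eq_self] at this
  rwa [← le_div_iff₀' hc, div_eq_inv_mul] at this

end RCLike

theorem IsHermitian.l2_opNorm_inv_add_sub_smul_le {H : Matrix n n ℂ} (hH : H.IsHermitian)
    (K : Matrix n n ℂ) {z : ℂ} (hK : ‖K‖ < |z.im|) :
    IsUnit (H + K - z • 1) ∧ ‖(H + K - z • 1)⁻¹‖ ≤ (|z.im| - ‖K‖)⁻¹ := by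
  have hlower : ∀ x, (|z.im| - ‖K‖) * ‖x‖ ≤ ‖toEuclideanCLM (𝕜 := ℂ) (H + K - z • 1) x‖ := by
    intro x
    have hHx := (isSymmetric_toEuclideanLin_iff.mpr hH).mul_norm_le_norm_sub_smul z x
    have hKx := (toEuclideanCLM (𝕜 := ℂ) K).le_opNorm x
    rw [l2_opNorm_toEuclideanCLM] at hKx
    have hsplit : toEuclideanCLM (𝕜 := ℂ) (H + K - z • 1) x
        = (toEuclideanLin H x - z • x) + toEuclideanCLM (𝕜 := ℂ) K x := by
      simp only [map_sub, map_add, map_smul, map_one]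
      rw [add_sub_right_comm]
      rfl
    rw [hsplit]
    linarith [norm_sub_le_norm_add (toEuclideanLin H x - z • x) (toEuclideanCLM (𝕜 := ℂ) K x)]
  exact ⟨isUnit_of_mul_norm_le_norm_toEuclideanCLM _ (sub_pos.mpr hK) hlower,
    l2_opNorm_inv_le_of_mul_norm_le_norm_toEuclideanCLM _ (sub_pos.mpr hK) hlower⟩

theorem IsHermitian.isUnit_sub_smul_one {H : Matrix n n ℂ} (hH : H.IsHermitian) {z : ℂ}
    (hz : z.im ≠ 0) : IsUnit (H - z • 1) := by
  simpa using (hH.l2_opNorm_inv_add_sub_smul_le 0 (by simpa using hz)).1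

def expWeight (φ : n → ℝ) : Matrix n n ℂ := diagonal fun x => (Real.exp (φ x) : ℂ)

theorem expWeight_mul_expWeight_neg (φ : n → ℝ) : expWeight φ * expWeight (-φ) = 1 := by
  rw [expWeight, expWeight, diagonal_mul_diagonal, ← diagonal_one]
  congr 1
  ext x
  rw [Pi.neg_apply, Real.exp_neg, Complex.ofReal_inv, mul_inv_cancel₀ (by simp)]

theorem expWeight_neg_mul_expWeight (φ : n → ℝ) : expWeight (-φ) * expWeight φ = 1 := by
  simpa using expWeight_mul_expWeight_neg (-φ)

theorem expWeight_mul_mul_expWeight_apply (φ ψ : n → ℝ) (X : Matrix n n ℂ) (x y : n) :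
    (expWeight φ * X * expWeight ψ) x y = Real.exp (φ x) * X x y * Real.exp (ψ y) := by
  rw [expWeight, expWeight, mul_diagonal, diagonal_mul]

theorem norm_inv_apply_sub_inv_apply_le {M₁ M₂ : Matrix n n ℂ} (h₁ : IsUnit M₁) (h₂ : IsUnit M₂)
    {φ : n → ℝ} {o : n} (hφ : φ o = 0) :
    ‖M₁⁻¹ o o - M₂⁻¹ o o‖ ≤ ‖expWeight (-φ) * M₁⁻¹ * expWeight φ‖ *
      ‖expWeight (-φ) * (M₂ - M₁) * expWeight (-φ)‖ * ‖expWeight φ * M₂⁻¹ * expWeight (-φ)‖ := by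
  set P := expWeight (-φ) * M₁⁻¹ * expWeight φ * (expWeight (-φ) * (M₂ - M₁) * expWeight (-φ)) *
    (expWeight φ * M₂⁻¹ * expWeight (-φ))
  have hcancel : ∀ X, expWeight φ * (expWeight (-φ) * X) = X := fun X => by
    rw [← Matrix.mul_assoc, expWeight_mul_expWeight_neg, Matrix.one_mul]
  have hcancel' : ∀ X, expWeight (-φ) * (expWeight φ * X) = X := fun X => by
    rw [← Matrix.mul_assoc, expWeight_neg_mul_expWeight, Matrix.one_mul]
  have hres : M₁⁻¹ - M₂⁻¹ = expWeight φ * P * expWeight φ :=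
    calc M₁⁻¹ - M₂⁻¹ = M₁⁻¹ * ((M₂ - M₁) * M₂⁻¹) := by
          rw [Matrix.sub_mul, mul_nonsing_inv _ ((isUnit_iff_isUnit_det _).mp h₂), Matrix.mul_sub,
            ← Matrix.mul_assoc, nonsing_inv_mul _ ((isUnit_iff_isUnit_det _).mp h₁),
            Matrix.mul_one, Matrix.one_mul]
      _ = expWeight φ * P * expWeight φ := by
          simp only [P, Matrix.mul_assoc, hcancel, hcancel', expWeight_neg_mul_expWeight,
            Matrix.mul_one]
  -- the outer weights are `e^{φ o} = 1` at the entry `(o, o)`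
  calc ‖M₁⁻¹ o o - M₂⁻¹ o o‖ = ‖P o o‖ := by
        rw [← sub_apply, hres, expWeight_mul_mul_expWeight_apply, hφ, Real.exp_zero,
          Complex.ofReal_one, one_mul, mul_one]
    _ ≤ ‖P‖ := norm_apply_le_l2_opNorm P o o
    _ ≤ _ := (l2_opNorm_mul _ _).trans (by gcongr; exact l2_opNorm_mul _ _)

end Matrix

namespace SimpleGraph

variable {V : Type*} {G : SimpleGraph V}

theorem dist_le_dist_add_one_of_adj {o x y : V} (hadj : G.Adj x y) :
    G.dist o y ≤ G.dist o x + 1 := by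
  rcases hadj.diff_dist_adj (u := o) with h | h | h <;> omega

theorem abs_mul_dist_sub_mul_dist_le {μ : ℝ} (hμ : 0 ≤ μ) {o x y : V} (hadj : G.Adj x y) :
    |μ * G.dist o x - μ * G.dist o y| ≤ μ := by
  have h₁ : (G.dist o y : ℝ) ≤ G.dist o x + 1 := by exact_mod_cast dist_le_dist_add_one_of_adj hadj
  have h₂ : (G.dist o x : ℝ) ≤ G.dist o y + 1 := by
    exact_mod_cast dist_le_dist_add_one_of_adj hadj.symm
  rw [← mul_sub, abs_mul, abs_of_nonneg hμ]
  exact mul_le_of_le_one_right hμ (abs_sub_le_iff.mpr ⟨by linarith, by linarith⟩)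

theorem mem_graphBall_iff {o v : V} {r : ℕ} :
    v ∈ graphBall G o r ↔ G.Reachable o v ∧ G.dist o v ≤ r := by
  refine ⟨fun ⟨p, hp⟩ => ⟨⟨p⟩, (dist_le p).trans hp⟩, fun ⟨hreach, hdist⟩ => ?_⟩
  obtain ⟨p, hp⟩ := hreach.exists_walk_length_eq_dist
  exact ⟨p, hp ▸ hdist⟩

theorem two_mul_add_one_le_dist_add_dist {o x y : V} {r : ℕ} (hadj : G.Adj x y)
    (hcross : ¬(x ∈ graphBall G o r ↔ y ∈ graphBall G o r)) :
    2 * r + 1 ≤ G.dist o x + G.dist o y := by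
  have key : ∀ {x y : V}, G.Adj x y → x ∈ graphBall G o r → y ∉ graphBall G o r →
      2 * r + 1 ≤ G.dist o x + G.dist o y := fun hadj hx hy => by
    obtain ⟨hreach, hdist⟩ := mem_graphBall_iff.mp hx
    have hfar : ¬G.dist o _ ≤ r := fun h =>
      hy (mem_graphBall_iff.mpr ⟨hreach.trans hadj.reachable, h⟩)
    have := dist_le_dist_add_one_of_adj (o := o) hadj
    omega
  by_cases hx : x ∈ graphBall G o r
  · exact key hadj hx fun hy => hcross ⟨fun _ => hy, fun _ => hx⟩
  · have hy : y ∈ graphBall G o r := by tauto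
    rw [add_comm (G.dist o x)]
    exact key hadj.symm hy hx

variable [DecidableRel G.Adj]

theorem abs_adjMatrix_apply (x y : V) : |G.adjMatrix ℝ x y| = G.adjMatrix ℝ x y := by
  by_cases hadj : G.Adj x y <;> simp [hadj]

variable (G) in
def cutAdjMatrix (S : Set V) : Matrix V V ℝ :=
  of fun i j => if (i ∈ S ↔ j ∈ S) then G.adjMatrix ℝ i j else 0

theorem isSymm_cutAdjMatrix (S : Set V) : (G.cutAdjMatrix S).IsSymm := by
  ext i j
  simp only [cutAdjMatrix, transpose_apply, of_apply, adjMatrix_apply, adj_comm, iff_comm]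

theorem abs_cutAdjMatrix_apply_le (S : Set V) (x y : V) :
    |G.cutAdjMatrix S x y| ≤ G.adjMatrix ℝ x y := by
  by_cases hadj : G.Adj x y <;> by_cases hS : (x ∈ S ↔ y ∈ S) <;> simp [cutAdjMatrix, hadj, hS]

theorem adjMatrix_sub_cutAdjMatrix_apply (S : Set V) (x y : V) :
    (G.adjMatrix ℝ - G.cutAdjMatrix S) x y = if (x ∈ S ↔ y ∈ S) then 0 else G.adjMatrix ℝ x y := by
  by_cases hS : (x ∈ S ↔ y ∈ S) <;> simp [cutAdjMatrix, hS]

theorem sum_adjMatrix_apply [Fintype V] (x : V) : ∑ y, G.adjMatrix ℝ x y = G.degree x := by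
  rw [degree, neighborFinset_eq_filter, ← Finset.sum_boole]
  rfl

end SimpleGraph

section Hamiltonian

variable {V : Type*} [DecidableEq V]

def hamiltonian (A : Matrix V V ℝ) (t : ℝ) (v : V → ℝ) : Matrix V V ℂ :=
  ((-t) • A + diagonal v).map (fun x => (x : ℂ))

theorem isHermitian_hamiltonian {A : Matrix V V ℝ} (hA : A.IsSymm) (t : ℝ) (v : V → ℝ) :
    (hamiltonian A t v).IsHermitian := by
  refine IsHermitian.map ?_ _ fun x => by simp
  rw [isHermitian_iff_isSymm]
  exact (hA.smul _).add (isSymm_diagonal v)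

theorem norm_hamiltonian_apply_le {G : SimpleGraph V} [DecidableRel G.Adj] {A : Matrix V V ℝ}
    (hA : ∀ x y, |A x y| ≤ G.adjMatrix ℝ x y) (t : ℝ) (v : V → ℝ) {x y : V} (hxy : x ≠ y) :
    ‖hamiltonian A t v x y‖ ≤ |t| * G.adjMatrix ℝ x y := by
  rw [hamiltonian, map_apply, Matrix.add_apply, diagonal_apply_ne _ hxy, add_zero,
    Matrix.smul_apply, smul_eq_mul, Complex.norm_real, Real.norm_eq_abs, abs_mul, abs_neg]
  exact mul_le_mul_of_nonneg_left (hA x y) (abs_nonneg t)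

theorem hamiltonian_sub_hamiltonian (A A' : Matrix V V ℝ) (t : ℝ) (v : V → ℝ) :
    hamiltonian A' t v - hamiltonian A t v = (t • (A - A')).map (fun x => (x : ℂ)) := by
  ext x y
  simp only [hamiltonian, Matrix.sub_apply, map_apply, Matrix.add_apply, Matrix.smul_apply,
    smul_eq_mul]
  push_cast
  ring

end Hamiltonian

namespace SimpleGraph

variable {V : Type*} [Fintype V] [DecidableEq V] {G : SimpleGraph V} [DecidableRel G.Adj]
  {d : ℕ}

theorem l2_opNorm_le_of_norm_apply_le_adjMatrix (hdeg : ∀ v, G.degree v ≤ d)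
    {K : Matrix V V ℂ} {c : ℝ} (hc : 0 ≤ c) (hK : ∀ x y, ‖K x y‖ ≤ c * G.adjMatrix ℝ x y) :
    ‖K‖ ≤ c * d := by
  have hrow : ∀ x, ∑ y, c * G.adjMatrix ℝ x y ≤ c * d := fun x => by
    rw [← Finset.mul_sum, sum_adjMatrix_apply]
    exact mul_le_mul_of_nonneg_left (by exact_mod_cast hdeg x) hc
  refine l2_opNorm_le_of_sum_norm_le K (by positivity)
    (fun x => (Finset.sum_le_sum fun y _ => hK x y).trans (hrow x))
    (fun y => (Finset.sum_le_sum fun x _ => hK x y).trans ?_)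
  simpa only [adjMatrix_apply, adj_comm] using hrow y

theorem norm_expWeight_mul_mul_expWeight_neg_sub_apply_le {H : Matrix V V ℂ} {s : ℝ}
    (hs : 0 ≤ s) (hloc : ∀ x y, x ≠ y → ‖H x y‖ ≤ s * G.adjMatrix ℝ x y) {φ : V → ℝ} {μ : ℝ}
    (hφ : ∀ x y, G.Adj x y → |φ x - φ y| ≤ μ) (x y : V) :
    ‖(expWeight φ * H * expWeight (-φ) - H) x y‖ ≤ s * (Real.exp μ - 1) * G.adjMatrix ℝ x y := by
  have hentry : (expWeight φ * H * expWeight (-φ) - H) x y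
      = H x y * ((Real.exp (φ x - φ y) - 1 : ℝ) : ℂ) := by
    rw [Matrix.sub_apply, expWeight_mul_mul_expWeight_apply, Pi.neg_apply, Real.exp_sub,
      div_eq_mul_inv, ← Real.exp_neg]
    push_cast
    ring
  rw [hentry, norm_mul, Complex.norm_real, Real.norm_eq_abs]
  by_cases hadj : G.Adj x y
  · have hexp : |Real.exp (φ x - φ y) - 1| ≤ Real.exp μ - 1 :=
      (Real.abs_exp_sub_one_le_exp_abs_sub_one _).trans (by gcongr; exact hφ x y hadj)
    have hHxy := hloc x y hadj.ne
    rw [adjMatrix_apply, if_pos hadj, mul_one] at hHxy ⊢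
    exact mul_le_mul hHxy hexp (abs_nonneg _) hs
  · rw [adjMatrix_apply, if_neg hadj, mul_zero]
    rcases eq_or_ne x y with rfl | hxy
    · simp
    · have hHxy := hloc x y hxy
      rw [adjMatrix_apply, if_neg hadj, mul_zero] at hHxy
      rw [norm_le_zero_iff.mp hHxy, norm_zero, zero_mul]

theorem l2_opNorm_expWeight_mul_resolvent_le (hdeg : ∀ v, G.degree v ≤ d)
    {H : Matrix V V ℂ} (hH : H.IsHermitian) {s : ℝ} (hs : 0 ≤ s)
    (hloc : ∀ x y, x ≠ y → ‖H x y‖ ≤ s * G.adjMatrix ℝ x y) {φ : V → ℝ} {μ : ℝ} (hμ : 0 ≤ μ)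
    (hφ : ∀ x y, G.Adj x y → |φ x - φ y| ≤ μ) {z : ℂ} (hz : s * (Real.exp μ - 1) * d < |z.im|) :
    ‖expWeight φ * (H - z • 1)⁻¹ * expWeight (-φ)‖ ≤ (|z.im| - s * (Real.exp μ - 1) * d)⁻¹ := by
  set K := expWeight φ * H * expWeight (-φ) - H
  have hc : 0 ≤ s * (Real.exp μ - 1) := mul_nonneg hs (by linarith [Real.one_le_exp_iff.mpr hμ])
  have hK : ‖K‖ ≤ s * (Real.exp μ - 1) * d := l2_opNorm_le_of_norm_apply_le_adjMatrix hdeg hc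
    (norm_expWeight_mul_mul_expWeight_neg_sub_apply_le hs hloc hφ)
  obtain ⟨-, hinv⟩ := hH.l2_opNorm_inv_add_sub_smul_le K (hK.trans_lt hz)
  have hHz : IsUnit (H - z • 1) :=
    hH.isUnit_sub_smul_one (abs_pos.mp ((mul_nonneg hc (Nat.cast_nonneg d)).trans_lt hz))
  have hconj : expWeight φ * (H - z • 1) * expWeight (-φ) = H + K - z • 1 := by
    simp only [K, Matrix.mul_sub, Matrix.sub_mul, Matrix.mul_smul, Matrix.smul_mul,
      Matrix.mul_one, expWeight_mul_expWeight_neg]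
    abel
  have hconj_inv : (H + K - z • 1)⁻¹ = expWeight φ * (H - z • 1)⁻¹ * expWeight (-φ) := by
    refine inv_eq_left_inv ?_
    rw [← hconj]
    simp only [Matrix.mul_assoc]
    rw [← Matrix.mul_assoc (expWeight (-φ)) (expWeight φ), expWeight_neg_mul_expWeight,
      Matrix.one_mul, ← Matrix.mul_assoc (H - z • 1)⁻¹,
      nonsing_inv_mul _ ((isUnit_iff_isUnit_det _).mp hHz), Matrix.one_mul,
      expWeight_mul_expWeight_neg]
  rw [← hconj_inv]
  exact hinv.trans (inv_anti₀ (by linarith) (by linarith))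

theorem l2_opNorm_expWeight_mul_hamiltonian_resolvent_le (hdeg : ∀ v, G.degree v ≤ d)
    {A : Matrix V V ℝ} (hA : A.IsSymm) (hAG : ∀ x y, |A x y| ≤ G.adjMatrix ℝ x y) (t : ℝ)
    (v : V → ℝ) {φ : V → ℝ} {μ : ℝ} (hμ : 0 ≤ μ) (hφ : ∀ x y, G.Adj x y → |φ x - φ y| ≤ μ)
    {z : ℂ} (hz : |t| * (Real.exp μ - 1) * d < |z.im|) :
    ‖expWeight φ * (hamiltonian A t v - z • 1)⁻¹ * expWeight (-φ)‖ ≤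
      (|z.im| - |t| * (Real.exp μ - 1) * d)⁻¹ :=
  l2_opNorm_expWeight_mul_resolvent_le hdeg (isHermitian_hamiltonian hA t v) (abs_nonneg t)
    (fun _ _ => norm_hamiltonian_apply_le hAG t v) hμ hφ hz

theorem l2_opNorm_expWeight_mul_hamiltonian_cut_sub_mul_expWeight_le
    (hdeg : ∀ v, G.degree v ≤ d) (t : ℝ) (v : V → ℝ) {μ : ℝ} (hμ : 0 ≤ μ) (o : V) (r : ℕ) :
    ‖expWeight (-fun x => μ * G.dist o x) *
        (hamiltonian (G.cutAdjMatrix (graphBall G o r)) t v - hamiltonian (G.adjMatrix ℝ) t v) *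
        expWeight (-fun x => μ * G.dist o x)‖ ≤
      |t| * Real.exp (-(μ * (2 * r + 1))) * d := by
  refine l2_opNorm_le_of_norm_apply_le_adjMatrix hdeg (by positivity) fun x y => ?_
  rw [hamiltonian_sub_hamiltonian, expWeight_mul_mul_expWeight_apply, map_apply,
    Matrix.smul_apply, adjMatrix_sub_cutAdjMatrix_apply]
  by_cases hadj : G.Adj x y
  swap
  · simp [adjMatrix_apply, hadj]
  simp only [adjMatrix_apply, if_pos hadj, mul_one]
  split_ifs with hcross
  · simp only [smul_zero, Complex.ofReal_zero, mul_zero, zero_mul, norm_zero]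
    positivity
  have hfar : μ * (2 * r + 1) ≤ μ * G.dist o x + μ * G.dist o y := by
    rw [← mul_add]
    exact mul_le_mul_of_nonneg_left
      (by exact_mod_cast two_mul_add_one_le_dist_add_dist hadj hcross) hμ
  rw [smul_eq_mul, mul_one, norm_mul, norm_mul, Complex.norm_real, Complex.norm_real,
    Complex.norm_real, Real.norm_eq_abs, Real.norm_eq_abs, Real.norm_eq_abs,
    abs_of_pos (Real.exp_pos _), abs_of_pos (Real.exp_pos _), mul_comm _ |t|, mul_assoc,
    Pi.neg_apply, Pi.neg_apply, ← Real.exp_add]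
  gcongr
  linarith

theorem norm_hamiltonian_inv_apply_sub_cut_le (hdeg : ∀ v, G.degree v ≤ d) (t : ℝ)
    (v : V → ℝ) {μ : ℝ} (hμ : 0 ≤ μ) {z : ℂ} (hz : |t| * (Real.exp μ - 1) * d < |z.im|)
    (o : V) (r : ℕ) :
    ‖(hamiltonian (G.adjMatrix ℝ) t v - z • 1)⁻¹ o o -
        (hamiltonian (G.cutAdjMatrix (graphBall G o r)) t v - z • 1)⁻¹ o o‖ ≤
      (|z.im| - |t| * (Real.exp μ - 1) * d)⁻¹ * (|t| * Real.exp (-(μ * (2 * r + 1))) * d) *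
        (|z.im| - |t| * (Real.exp μ - 1) * d)⁻¹ := by
  set φ : V → ℝ := fun x => μ * G.dist o x
  have hφ : ∀ x y, G.Adj x y → |φ x - φ y| ≤ μ := fun _ _ => abs_mul_dist_sub_mul_dist_le hμ
  have hφneg : ∀ x y, G.Adj x y → |(-φ) x - (-φ) y| ≤ μ := fun x y hadj => by
    rw [Pi.neg_apply, Pi.neg_apply, neg_sub_neg, abs_sub_comm]
    exact hφ x y hadj
  have hc : 0 ≤ |t| * (Real.exp μ - 1) * d := by
    have := Real.one_le_exp_iff.mpr hμ
    have : (0 : ℝ) ≤ d := d.cast_nonneg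
    positivity
  have hzim : z.im ≠ 0 := abs_pos.mp (hc.trans_lt hz)
  have hR := l2_opNorm_expWeight_mul_hamiltonian_resolvent_le hdeg (isSymm_adjMatrix G)
    (fun x y => (abs_adjMatrix_apply x y).le) t v hμ hφneg hz
  have hR' := l2_opNorm_expWeight_mul_hamiltonian_resolvent_le hdeg
    (G.isSymm_cutAdjMatrix (graphBall G o r)) (abs_cutAdjMatrix_apply_le _) t v hμ hφ hz
  rw [neg_neg] at hR
  have hcut := l2_opNorm_expWeight_mul_hamiltonian_cut_sub_mul_expWeight_le hdeg t v hμ o r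
  refine (norm_inv_apply_sub_inv_apply_le
    ((isHermitian_hamiltonian (isSymm_adjMatrix G) t v).isUnit_sub_smul_one hzim)
    ((isHermitian_hamiltonian (G.isSymm_cutAdjMatrix (graphBall G o r)) t v).isUnit_sub_smul_one
      hzim)
    (φ := φ) (by simp [φ])).trans ?_
  rw [sub_sub_sub_cancel_right]
  gcongr

end SimpleGraph

theorem stmt13 (V : Type*) [Fintype V] [DecidableEq V] (d : ℕ) (hd : 0 < d)
    (G : SimpleGraph V) (hdeg : ∀ v : V, G.degree v ≤ d)
    (o : V) (r : ℕ) (t : ℝ) (ht : 0 < t) (vpot : V → ℝ) (E η : ℝ) (hη : 0 < η) :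
    norm
        (((((-t) • G.adjMatrix ℝ + Matrix.diagonal vpot).map (fun x => (x : ℂ)) -
            (E + η * Complex.I) • 1)⁻¹ o o) -
          ((((-t) • (Matrix.of fun i j =>
                if (i ∈ graphBall G o r ↔ j ∈ graphBall G o r) then
                  G.adjMatrix ℝ i j else 0) +
              Matrix.diagonal vpot).map (fun x => (x : ℂ)) -
            (E + η * Complex.I) • 1)⁻¹ o o)) ≤
      4 * t * d / η ^ 2 *
        Real.exp (-2 * Real.log (1 + η / (4 * t * d)) * r) := by
  set μ := Real.log (1 + η / (4 * t * d))
  have hμ : 0 ≤ μ := Real.log_nonneg (le_add_of_nonneg_right (by positivity))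
  have hzim : |(E + η * Complex.I : ℂ).im| = η := by simp [abs_of_pos hη]
  have hstep : |t| * (Real.exp μ - 1) * d = η / 4 := by
    rw [Real.exp_log (by positivity), abs_of_pos ht]
    field_simp
    ring
  have key := SimpleGraph.norm_hamiltonian_inv_apply_sub_cut_le hdeg t vpot hμ
    (z := E + η * Complex.I) (by rw [hstep, hzim]; linarith) o r
  rw [hstep, hzim, show η - η / 4 = 3 * η / 4 by ring, abs_of_pos ht] at key
  refine key.trans ?_
  calc (3 * η / 4)⁻¹ * (t * Real.exp (-(μ * (2 * r + 1))) * d) * (3 * η / 4)⁻¹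
      = 16 / 9 * (t * d / η ^ 2) * Real.exp (-(μ * (2 * r + 1))) := by
        field_simp
        ring
    _ ≤ 4 * (t * d / η ^ 2) * Real.exp (-2 * μ * r) := by
        gcongr
        · norm_num
        · nlinarith
    _ = _ := by ring
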